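/- arXiv:2201.02957 — 4 statements merged into one kernel-verified Lean document; each statement's English description precedes it below -/
import Mathlib

section
/- Let G = (V,E) be a finite simple graph and suppose K₁ and K₂ are maximal cliques of G with #K₁ > #K₂. Let η, ζ ∈ ℤ^{V ∪ {−∞}} with η ∈ U⁽¹⁾(G) and ζ ∈ U⁽⁻¹⁾(G) (as defined via clique and odd-cycle inequalities). Then η(−∞) + ζ(−∞) ≥ #K₁ − #K₂. In particular, every monomial in trace(ω_R) for R = E_K[HSTAB(G)] has degree at least #K₁ − #K₂. -/
variable {V : Type*} [DecidableEq V]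

/-- A maximal clique of a graph. -/
def IsMaxClique (G : SimpleGraph V) (K : Finset V) : Prop :=
  G.IsClique ↑K ∧ ∀ K' : Finset V, G.IsClique ↑K' → K ⊆ K' → K = K'

/-- A chordless odd cycle of length `k ≥ 5`, given by its cyclically indexed
vertices `v 0, …, v (k-1)`. -/
def IsChordlessOddCycle (G : SimpleGraph V) (k : ℕ) (v : ℕ → V) : Prop :=
  Odd k ∧ 5 ≤ k ∧ (∀ i < k, ∀ j < k, v i = v j → i = j) ∧
    (∀ i < k, G.Adj (v i) (v ((i + 1) % k))) ∧
    (∀ i < k, ∀ j < k, G.Adj (v i) (v j) → (i + 1) % k = j ∨ (j + 1) % k = i)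

/-- The set `U⁽ⁿ⁾(G)` of integer vectors `μ` on `V ∪ {-∞}` (with `none = -∞`):
`μ(z) ≥ n` for all `z ∈ V`, `μ⁺(K) ≤ μ(-∞) - n` for every maximal clique `K`, and
`μ⁺(C) ≤ μ(-∞)(#C-1)/2 - n` for every chordless odd cycle `C` of length at least 5
(the cycle inequality is stated multiplied by 2). -/
def USet (G : SimpleGraph V) (n : ℤ) : Set (Option V → ℤ) :=
  {μ | (∀ z : V, n ≤ μ (some z)) ∧
    (∀ K : Finset V, IsMaxClique G K → ∑ x ∈ K, μ (some x) ≤ μ none - n) ∧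
    (∀ (k : ℕ) (v : ℕ → V), IsChordlessOddCycle G k v →
      2 * ∑ x ∈ (Finset.range k).image v, μ (some x) ≤ μ none * ((k : ℤ) - 1) - 2 * n)}

/-- If `K₁`, `K₂` are maximal cliques with `#K₁ > #K₂`, `η ∈ U⁽¹⁾(G)` and
`ζ ∈ U⁽⁻¹⁾(G)`, then `η(-∞) + ζ(-∞) ≥ #K₁ - #K₂`; hence every monomial in the trace
of the canonical module of `E_K[HSTAB(G)]` has degree at least `#K₁ - #K₂`. -/
theorem stmt13 (G : SimpleGraph V) (K₁ K₂ : Finset V)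
    (hK₁ : IsMaxClique G K₁) (hK₂ : IsMaxClique G K₂) (hcard : K₂.card < K₁.card)
    (η ζ : Option V → ℤ) (hη : η ∈ USet G 1) (hζ : ζ ∈ USet G (-1)) :
    (K₁.card : ℤ) - (K₂.card : ℤ) ≤ η none + ζ none := by
  obtain ⟨hη1, hη2, -⟩ := hη
  obtain ⟨hζ1, hζ2, -⟩ := hζ
  have h1 : (K₁.card : ℤ) ≤ ∑ x ∈ K₁, η (some x) := by
    calc (K₁.card : ℤ) = ∑ _x ∈ K₁, (1 : ℤ) := by simp
    _ ≤ _ := Finset.sum_le_sum fun x _ => hη1 x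
  have h2 : -(K₂.card : ℤ) ≤ ∑ x ∈ K₂, ζ (some x) := by
    calc -(K₂.card : ℤ) = ∑ _x ∈ K₂, (-1 : ℤ) := by simp
    _ ≤ _ := Finset.sum_le_sum fun x _ => hζ1 x
  have := hη2 K₁ hK₁
  have := hζ2 K₂ hK₂
  linarith
end

section
/- Let G = (V,E) be a finite simple graph, K₁, K₂ maximal cliques with #K₁ > #K₂ and p ∈ K₁ ∩ K₂, and n ≥ 1 an integer. Define μ ∈ ℤ^{V∪{−∞}} by μ(p) = μ(−∞) = n and μ(x) = 0 otherwise. Then there do not exist η ∈ U⁽¹⁾(G) and ζ ∈ U⁽⁻¹⁾(G) with μ = η + ζ. -/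
variable {V : Type*} [DecidableEq V]

/-- Non-purity obstruction: with maximal cliques `K₁, K₂` of different sizes meeting in
`p`, the vector `μ` with `μ(p) = μ(-∞) = n ≥ 1` and `μ = 0` elsewhere cannot be written
as `η + ζ` with `η ∈ U⁽¹⁾(G)` and `ζ ∈ U⁽⁻¹⁾(G)`. -/
theorem stmt14 (G : SimpleGraph V) (K₁ K₂ : Finset V)
    (hK₁ : IsMaxClique G K₁) (hK₂ : IsMaxClique G K₂) (hcard : K₂.card < K₁.card)
    (p : V) (hp : p ∈ K₁ ∩ K₂) (n : ℤ) (hn : 1 ≤ n)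
    (μ : Option V → ℤ) (hμp : μ (some p) = n) (hμinf : μ none = n)
    (hμ0 : ∀ x : V, x ≠ p → μ (some x) = 0) :
    ¬ ∃ η ∈ USet G 1, ∃ ζ ∈ USet G (-1), μ = η + ζ := by
  rintro ⟨η, ⟨hη1, hη2, -⟩, ζ, ⟨hζ1, hζ2, -⟩, hsum⟩
  simp only [Finset.mem_inter] at hp
  have hadd : ∀ o : Option V, μ o = η o + ζ o := fun o => by rw [hsum]; rfl
  have hηx : ∀ x : V, x ≠ p → η (some x) = 1 := fun x hx => by
    have := hμ0 x hx; have := hadd (some x); have := hη1 x; have := hζ1 x; omega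
  have hζx : ∀ x : V, x ≠ p → ζ (some x) = -1 := fun x hx => by
    have := hμ0 x hx; have := hadd (some x); have := hη1 x; have := hζ1 x; omega
  have e1 := hη2 K₁ hK₁
  have e2 := hζ2 K₂ hK₂
  have s1 : ∑ x ∈ K₁, η (some x) = η (some p) + ((K₁.card : ℤ) - 1) := by
    rw [← Finset.add_sum_erase _ _ hp.1]
    have : ∑ x ∈ K₁.erase p, η (some x) = ∑ _x ∈ K₁.erase p, (1 : ℤ) :=
      Finset.sum_congr rfl fun x hx => hηx x (Finset.ne_of_mem_erase hx)
    rw [this, Finset.sum_const, Finset.card_erase_of_mem hp.1]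
    have hc : 1 ≤ K₁.card := Finset.card_pos.mpr ⟨p, hp.1⟩
    push_cast [nsmul_eq_mul]
    omega
  have s2 : ∑ x ∈ K₂, ζ (some x) = ζ (some p) - ((K₂.card : ℤ) - 1) := by
    rw [← Finset.add_sum_erase _ _ hp.2]
    have : ∑ x ∈ K₂.erase p, ζ (some x) = ∑ _x ∈ K₂.erase p, (-1 : ℤ) :=
      Finset.sum_congr rfl fun x hx => hζx x (Finset.ne_of_mem_erase hx)
    rw [this, Finset.sum_const, Finset.card_erase_of_mem hp.2]
    have hc : 1 ≤ K₂.card := Finset.card_pos.mpr ⟨p, hp.2⟩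
    push_cast [nsmul_eq_mul]
    omega
  rw [s1] at e1
  rw [s2] at e2
  have hp' := hadd (some p)
  have hinf := hadd none
  have hc : (K₂.card : ℤ) < (K₁.card : ℤ) := by exact_mod_cast hcard
  omega
end

section
/- Let G = (V,E) be a finite simple graph such that V decomposes as a disjoint union V₁ ⊔ V₂ of unions of connected components, where every vertex in V₁ is isolated (maximal cliques of size 1) and every maximal clique contained in V₂ has size 2, and every chordless odd cycle of length ≥ 5 has length exactly 5. Let μ ∈ U⁽⁰⁾(G) with μ(−∞) ≥ 1, and suppose μ restricted to V₁⁻ decomposes as μ₁ + μ₂ with μ₁, μ₂ ∈ U⁽⁰⁾(G₁) and μ₁(−∞) = 1 (G₁ the induced subgraph on V₁). Define η(x) = μ₁(x)+1 for x ∈ V₁, η(x) = 1 for x ∈ V₂, η(−∞) = 3; and ζ(x) = μ₂(x)−1 for x ∈ V₁, ζ(x) = μ(x)−1 for x ∈ V₂, ζ(−∞) = μ(−∞)−3. Then η ∈ U⁽¹⁾(G), ζ ∈ U⁽⁻¹⁾(G), and η + ζ = μ. -/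
variable {V : Type*} [DecidableEq V]

/-- Construction of a decomposition `μ = η + ζ`, `η ∈ U⁽¹⁾`, `ζ ∈ U⁽⁻¹⁾` in the case
where the clique numbers of the components are 1 (on `V₁`) and 2 (on `V₂`). -/
theorem stmt18 (G : SimpleGraph V) (V₁ V₂ : Set V)
    (hdisj : Disjoint V₁ V₂) (hunion : V₁ ∪ V₂ = Set.univ)
    (hcomp : ∀ x y : V, G.Adj x y → (x ∈ V₁ ↔ y ∈ V₁))
    (hiso : ∀ x ∈ V₁, ∀ y : V, ¬ G.Adj x y)
    (hK2 : ∀ K : Finset V, IsMaxClique G K → ↑K ⊆ V₂ → K.card = 2)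
    (hC5 : ∀ (k : ℕ) (v : ℕ → V), IsChordlessOddCycle G k v → k = 5)
    (μ : Option V → ℤ) (hμ : μ ∈ USet G 0) (hμinf : 1 ≤ μ none)
    (μ₁ μ₂ : Option ↥V₁ → ℤ)
    (hμ₁ : μ₁ ∈ USet (G.induce V₁) 0) (hμ₂ : μ₂ ∈ USet (G.induce V₁) 0)
    (hdec : ∀ x : ↥V₁, μ₁ (some x) + μ₂ (some x) = μ (some ↑x))
    (hdecinf : μ₁ none + μ₂ none = μ none) (hμ₁inf : μ₁ none = 1)
    (η ζ : Option V → ℤ)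
    (hη₁ : ∀ x : ↥V₁, η (some ↑x) = μ₁ (some x) + 1)
    (hη₂ : ∀ x ∈ V₂, η (some x) = 1) (hηinf : η none = 3)
    (hζ₁ : ∀ x : ↥V₁, ζ (some ↑x) = μ₂ (some x) - 1)
    (hζ₂ : ∀ x ∈ V₂, ζ (some x) = μ (some x) - 1) (hζinf : ζ none = μ none - 3) :
    η ∈ USet G 1 ∧ ζ ∈ USet G (-1) ∧ η + ζ = μ := by
  obtain ⟨hμ0, hμK, hμC⟩ := hμ
  obtain ⟨hμ₁0, hμ₁K, -⟩ := hμ₁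
  obtain ⟨hμ₂0, hμ₂K, -⟩ := hμ₂
  have hmem : ∀ x : V, x ∈ V₁ ∨ x ∈ V₂ := by
    intro x
    have : x ∈ V₁ ∪ V₂ := hunion ▸ Set.mem_univ x
    exact this
  -- vertices with a neighbor lie in V₂
  have hV₂ : ∀ x y : V, G.Adj x y → x ∈ V₂ := by
    intro x y h
    rcases hmem x with h1 | h2
    · exact absurd h (hiso x h1 y)
    · exact h2
  -- {x} is a maximal clique of the induced graph for any x : V₁
  have hsing : ∀ xv : ↥V₁, IsMaxClique (G.induce V₁) {xv} := by
    intro xv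
    constructor
    · simp
    · intro K' hK' hsub
      refine (Finset.Subset.antisymm (fun y hy => ?_) hsub).symm
      simp only [Finset.mem_singleton]
      by_contra hne
      have hx : xv ∈ K' := hsub (Finset.mem_singleton_self xv)
      have hadj : (G.induce V₁).Adj xv y := hK' hx hy (fun h => hne (h.symm))
      exact hiso (↑xv) xv.2 (↑y) hadj
  -- a maximal clique of G containing a V₁-vertex is a singleton
  have hMC1 : ∀ K : Finset V, IsMaxClique G K → ∀ x ∈ K, x ∈ V₁ → K = {x} := by
    intro K hK x hx hx1
    refine Finset.Subset.antisymm (fun y hy => ?_) (by simp [hx])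
    simp only [Finset.mem_singleton]
    by_contra hne
    have hadj : G.Adj x y := hK.1 hx hy (fun h => hne h.symm)
    exact hiso x hx1 y hadj
  -- facts about chordless odd cycles
  have hcyc : ∀ (k : ℕ) (v : ℕ → V), IsChordlessOddCycle G k v →
      (∀ x ∈ (Finset.range k).image v, x ∈ V₂) ∧
      ((Finset.range k).image v).card = k := by
    intro k v hc
    obtain ⟨-, -, hinj, hadj, -⟩ := hc
    constructor
    · intro x hx
      obtain ⟨i, hi, rfl⟩ := Finset.mem_image.1 hx
      rw [Finset.mem_range] at hi
      exact hV₂ _ _ (hadj i hi)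
    · rw [Finset.card_image_of_injOn, Finset.card_range]
      intro i hi j hj hij
      exact hinj i (Finset.mem_range.1 hi) j (Finset.mem_range.1 hj) hij
  have hμ₂inf : μ₂ none = μ none - 1 := by omega
  refine ⟨⟨?_, ?_, ?_⟩, ⟨?_, ?_, ?_⟩, ?_⟩
  · -- η ≥ 1
    intro z
    rcases hmem z with h1 | h2
    · rw [hη₁ ⟨z, h1⟩]
      have := hμ₁0 ⟨z, h1⟩
      omega
    · rw [hη₂ z h2]
  · -- η clique condition
    intro K hK
    rw [hηinf]
    by_cases hex : ∃ x ∈ K, x ∈ V₁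
    · obtain ⟨x, hx, hx1⟩ := hex
      rw [hMC1 K hK x hx hx1, Finset.sum_singleton, hη₁ ⟨x, hx1⟩]
      have h1 := hμ₁K {⟨x, hx1⟩} (hsing ⟨x, hx1⟩)
      rw [Finset.sum_singleton] at h1
      omega
    · push_neg at hex
      have hsub : ↑K ⊆ V₂ := by
        intro x hx
        rcases hmem x with h1 | h2
        · exact absurd h1 (hex x hx)
        · exact h2
      have hcard := hK2 K hK hsub
      have : ∑ x ∈ K, η (some x) = ∑ x ∈ K, 1 := by
        refine Finset.sum_congr rfl fun x hx => ?_
        exact hη₂ x (hsub hx)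
      rw [this, Finset.sum_const, hcard]
      norm_num
  · -- η cycle condition
    intro k v hc
    obtain ⟨hmem5, hcard⟩ := hcyc k v hc
    have hk5 := hC5 k v hc
    have : ∑ x ∈ (Finset.range k).image v, η (some x) = ∑ x ∈ (Finset.range k).image v, 1 := by
      refine Finset.sum_congr rfl fun x hx => hη₂ x (hmem5 x hx)
    rw [this, Finset.sum_const, hcard, hηinf, hk5]
    norm_num
  · -- ζ ≥ -1
    intro z
    rcases hmem z with h1 | h2
    · rw [hζ₁ ⟨z, h1⟩]
      have := hμ₂0 ⟨z, h1⟩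
      omega
    · rw [hζ₂ z h2]
      have := hμ0 z
      omega
  · -- ζ clique condition
    intro K hK
    rw [hζinf]
    by_cases hex : ∃ x ∈ K, x ∈ V₁
    · obtain ⟨x, hx, hx1⟩ := hex
      rw [hMC1 K hK x hx hx1, Finset.sum_singleton, hζ₁ ⟨x, hx1⟩]
      have h1 := hμ₂K {⟨x, hx1⟩} (hsing ⟨x, hx1⟩)
      rw [Finset.sum_singleton] at h1
      omega
    · push_neg at hex
      have hsub : ↑K ⊆ V₂ := by
        intro x hx
        rcases hmem x with h1 | h2
        · exact absurd h1 (hex x hx)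
        · exact h2
      have hcard := hK2 K hK hsub
      have h2 : ∑ x ∈ K, ζ (some x) = ∑ x ∈ K, (μ (some x) - 1) :=
        Finset.sum_congr rfl fun x hx => hζ₂ x (hsub hx)
      have h3 := hμK K hK
      rw [h2, Finset.sum_sub_distrib, Finset.sum_const, hcard, nsmul_eq_mul]
      omega
  · -- ζ cycle condition
    intro k v hc
    obtain ⟨hmem5, hcard⟩ := hcyc k v hc
    have hk5 := hC5 k v hc
    have h2 : ∑ x ∈ (Finset.range k).image v, ζ (some x) =
        ∑ x ∈ (Finset.range k).image v, (μ (some x) - 1) :=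
      Finset.sum_congr rfl fun x hx => hζ₂ x (hmem5 x hx)
    have h3 := hμC k v hc
    rw [h2, Finset.sum_sub_distrib, Finset.sum_const, hcard, hζinf, hk5, nsmul_eq_mul]
    rw [hk5] at h3
    push_cast at h3 ⊢
    omega
  · -- η + ζ = μ
    funext z
    match z with
    | none => simp only [Pi.add_apply, hηinf, hζinf]; ring
    | some x =>
      rcases hmem x with h1 | h2
      · have hd : μ₁ (some ⟨x, h1⟩) + μ₂ (some ⟨x, h1⟩) = μ (some x) := hdec ⟨x, h1⟩
        have he : η (some x) = μ₁ (some ⟨x, h1⟩) + 1 := hη₁ ⟨x, h1⟩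
        have hz : ζ (some x) = μ₂ (some ⟨x, h1⟩) - 1 := hζ₁ ⟨x, h1⟩
        simp only [Pi.add_apply, he, hz]
        omega
      · simp only [Pi.add_apply, hη₂ x h2, hζ₂ x h2]
        omega
end

section
/- Let G = (V,E) be a finite simple graph with V a disjoint union V₂ ⊔ V₃ of unions of connected components, where every maximal clique in V₂ has size 2 and every chordless odd cycle in V₂ of length ≥ 5 has length 5, and every maximal clique in V₃ has size 3 with no chordless odd cycle of length ≥ 5 inside V₃. Let μ ∈ U⁽⁰⁾(G) with μ(−∞) ≥ 1, and suppose μ restricted to V₃⁻ decomposes as μ₁ + μ₂ with μ₁, μ₂ ∈ U⁽⁰⁾(G₃) and μ₁(−∞) = 1 (G₃ the induced subgraph on V₃). Define η(x) = μ(x)+1 for x ∈ V₂, η(x) = μ₂(x)+1 for x ∈ V₃, η(−∞) = μ(−∞)+3; and ζ(x) = −1 for x ∈ V₂, ζ(x) = μ₁(x)−1 for x ∈ V₃, ζ(−∞) = −3. Then η ∈ U⁽¹⁾(G), ζ ∈ U⁽⁻¹⁾(G), and η + ζ = μ. -/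
variable {V : Type*} [DecidableEq V]

/-!
Since `V₂` and `V₃` are unions of components, every maximal clique and every chordless odd
cycle lies on one side, so the hypotheses leave only edges and 5-cycles in `V₂` and triangles
in `V₃`. Each inequality for `η` or `ζ` is then the corresponding one for `μ` (on `V₂`) or for
`μ₂`, `μ₁` (on `V₃`, through the induced subgraph) plus constants, and the constants balance
exactly because edges have 2 vertices, triangles 3 and the cycles 5, given
`μ₂(-∞) = μ(-∞) - 1` and `μ₁(-∞) = 1`.
-/

open Finset

section

variable {α : Type*} {G : SimpleGraph α} {S : Set α}

theorem SimpleGraph.IsClique.subset_or_subset_compl (hS : ∀ x y, G.Adj x y → (x ∈ S ↔ y ∈ S))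
    {K : Set α} (hK : G.IsClique K) : K ⊆ S ∨ K ⊆ Sᶜ := by
  by_contra! h
  obtain ⟨⟨a, haK, haS⟩, ⟨b, hbK, hbS⟩⟩ := And.imp Set.not_subset.mp Set.not_subset.mp h
  have hab : a ≠ b := by rintro rfl; exact hbS haS
  exact haS ((hS a b (hK haK hbK hab)).mpr (not_not.mp hbS))

theorem IsMaxClique.subtype_induce [DecidablePred (· ∈ S)] {K : Finset α} (hK : IsMaxClique G K)
    (hKS : ∀ x ∈ K, x ∈ S) : IsMaxClique (G.induce S) (K.subtype (· ∈ S)) := by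
  refine ⟨fun a ha b hb hab => hK.1 (mem_subtype.mp ha) (mem_subtype.mp hb)
    (Subtype.val_injective.ne hab), fun K' hK' hsub => ?_⟩
  have hKK' : K = K'.map (Function.Embedding.subtype _) := by
    refine hK.2 _ ?_ fun x hx =>
      mem_map_of_mem _ (hsub (show (⟨x, hKS x hx⟩ : S) ∈ K.subtype (· ∈ S) from mem_subtype.mpr hx))
    rw [coe_map]
    exact SimpleGraph.isClique_induce_iff.mp hK'
  refine hsub.antisymm fun y hy => mem_subtype.mpr ?_
  rw [hKK']
  exact mem_map_of_mem _ hy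

theorem IsChordlessOddCycle.mem_iff_mem_zero {k : ℕ} {v : ℕ → α} (hc : IsChordlessOddCycle G k v)
    (hS : ∀ x y, G.Adj x y → (x ∈ S ↔ y ∈ S)) : ∀ i < k, (v i ∈ S ↔ v 0 ∈ S) := by
  intro i hi
  induction i with
  | zero => rfl
  | succ i ih =>
    have hadj := hc.2.2.2.1 i (by omega)
    rw [Nat.mod_eq_of_lt hi] at hadj
    rw [← hS _ _ hadj, ih (by omega)]

theorem IsChordlessOddCycle.forall_mem_or_forall_mem_compl {k : ℕ} {v : ℕ → α}
    (hc : IsChordlessOddCycle G k v) (hS : ∀ x y, G.Adj x y → (x ∈ S ↔ y ∈ S)) :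
    (∀ i < k, v i ∈ S) ∨ (∀ i < k, v i ∈ Sᶜ) := by
  by_cases h0 : v 0 ∈ S
  · exact .inl fun i hi => (hc.mem_iff_mem_zero hS i hi).mpr h0
  · exact .inr fun i hi => mt (hc.mem_iff_mem_zero hS i hi).mp h0

theorem sum_eq_sum_add_card_mul {R : Type*} [Semiring R] {f g : α → R} {c : R}
    (hf : ∀ x ∈ S, f x = g x + c) {s : Finset α} (hs : ∀ x ∈ s, x ∈ S) :
    ∑ x ∈ s, f x = ∑ x ∈ s, g x + #s * c := by
  rw [sum_congr rfl fun x hx => hf x (hs x hx), sum_add_distrib, sum_const, nsmul_eq_mul]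

theorem sum_eq_sum_subtype_add_card_mul {R : Type*} [Semiring R] [DecidablePred (· ∈ S)]
    {f : α → R} {g : S → R} {c : R} (hf : ∀ x : S, f x = g x + c) {s : Finset α}
    (hs : ∀ x ∈ s, x ∈ S) : ∑ x ∈ s, f x = ∑ x ∈ s.subtype (· ∈ S), g x + #s * c := by
  rw [← sum_subtype_of_mem _ hs, sum_congr rfl fun x _ => hf x, sum_add_distrib, sum_const,
    card_subtype, filter_true_of_mem hs, nsmul_eq_mul]

end

variable {G : SimpleGraph V}

theorem IsChordlessOddCycle.card_image {k : ℕ} {v : ℕ → V} (hc : IsChordlessOddCycle G k v) :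
    #((range k).image v) = k := by
  rw [card_image_of_injOn, card_range]
  intro i hi j hj hij
  exact hc.2.2.1 i (mem_range.mp hi) j (mem_range.mp hj) hij

theorem sum_le_of_mem_USet_induce {S : Set V} [DecidablePred (· ∈ S)] {n : ℤ}
    {ν : Option S → ℤ} (hν : ν ∈ USet (G.induce S) n) {K : Finset V} (hK : IsMaxClique G K)
    (hKS : ∀ x ∈ K, x ∈ S) : ∑ x ∈ K.subtype (· ∈ S), ν (some x) ≤ ν none - n :=
  hν.2.1 _ (hK.subtype_induce hKS)

section Splitting

variable {V₂ V₃ : Set V} (hcover : ∀ z, z ∈ V₂ ∨ z ∈ V₃)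
  (hclique : ∀ K, IsMaxClique G K → (↑K ⊆ V₂ ∧ #K = 2) ∨ (↑K ⊆ V₃ ∧ #K = 3))
  (hcycle : ∀ k v, IsChordlessOddCycle G k v → k = 5 ∧ ∀ x ∈ (range k).image v, x ∈ V₂)
include hcover hclique hcycle

theorem mem_USet_one_of_shift {μ : Option V → ℤ} {μ₂ : Option V₃ → ℤ} (hμ : μ ∈ USet G 0)
    (hμ₂ : μ₂ ∈ USet (G.induce V₃) 0) (hμ₂inf : μ₂ none < μ none) {η : Option V → ℤ}
    (hη₂ : ∀ x ∈ V₂, η (some x) = μ (some x) + 1) (hη₃ : ∀ x : V₃, η (some ↑x) = μ₂ (some x) + 1)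
    (hηinf : η none = μ none + 3) : η ∈ USet G 1 := by
  classical
  refine ⟨fun z => ?_, fun K hK => ?_, fun k v hc => ?_⟩
  · rcases hcover z with h | h
    · linarith [hη₂ z h, hμ.1 z]
    · linarith [hη₃ ⟨z, h⟩, hμ₂.1 ⟨z, h⟩]
  · rcases hclique K hK with ⟨hsub, hcard⟩ | ⟨hsub, hcard⟩
    · rw [sum_eq_sum_add_card_mul hη₂ hsub, hcard, hηinf]
      push_cast
      linarith [hμ.2.1 K hK]
    · rw [sum_eq_sum_subtype_add_card_mul hη₃ hsub, hcard, hηinf]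
      push_cast
      linarith [sum_le_of_mem_USet_induce hμ₂ hK hsub]
  · obtain ⟨rfl, hV₂⟩ := hcycle k v hc
    rw [sum_eq_sum_add_card_mul hη₂ hV₂, hc.card_image, hηinf]
    have hμC := hμ.2.2 5 v hc
    push_cast at hμC ⊢
    linarith

theorem mem_USet_neg_one_of_shift {μ₁ : Option V₃ → ℤ} (hμ₁ : μ₁ ∈ USet (G.induce V₃) 0)
    (hμ₁inf : μ₁ none ≤ 1) {ζ : Option V → ℤ} (hζ₂ : ∀ x ∈ V₂, ζ (some x) = -1)
    (hζ₃ : ∀ x : V₃, ζ (some ↑x) = μ₁ (some x) - 1) (hζinf : ζ none = -3) :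
    ζ ∈ USet G (-1) := by
  classical
  refine ⟨fun z => ?_, fun K hK => ?_, fun k v hc => ?_⟩
  · rcases hcover z with h | h
    · rw [hζ₂ z h]
    · linarith [hζ₃ ⟨z, h⟩, hμ₁.1 ⟨z, h⟩]
  · rcases hclique K hK with ⟨hsub, hcard⟩ | ⟨hsub, hcard⟩
    · rw [sum_eq_card_nsmul fun x hx => hζ₂ x (hsub hx), hcard, hζinf]
      norm_num
    · have hζ₃' (x : V₃) : ζ (some ↑x) = μ₁ (some x) + -1 := (hζ₃ x).trans (sub_eq_add_neg _ _)
      rw [sum_eq_sum_subtype_add_card_mul hζ₃' hsub, hcard, hζinf]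
      push_cast
      linarith [sum_le_of_mem_USet_induce hμ₁ hK hsub]
  · obtain ⟨rfl, hV₂⟩ := hcycle k v hc
    rw [sum_eq_card_nsmul fun x hx => hζ₂ x (hV₂ x hx), hc.card_image, hζinf]
    norm_num

end Splitting

theorem stmt19_general (G : SimpleGraph V) (V₂ V₃ : Set V)
    (hdisj : Disjoint V₂ V₃) (hunion : V₂ ∪ V₃ = Set.univ)
    (hcomp : ∀ x y : V, G.Adj x y → (x ∈ V₂ ↔ y ∈ V₂))
    (hK2 : ∀ K : Finset V, IsMaxClique G K → ↑K ⊆ V₂ → K.card = 2)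
    (hK3 : ∀ K : Finset V, IsMaxClique G K → ↑K ⊆ V₃ → K.card = 3)
    (hC5 : ∀ (k : ℕ) (v : ℕ → V), IsChordlessOddCycle G k v →
      (∀ i < k, v i ∈ V₂) → k = 5)
    (hC3 : ∀ (k : ℕ) (v : ℕ → V), IsChordlessOddCycle G k v →
      ¬ (∀ i < k, v i ∈ V₃))
    (μ : Option V → ℤ) (hμ : μ ∈ USet G 0)
    (μ₁ μ₂ : Option ↥V₃ → ℤ)
    (hμ₁ : μ₁ ∈ USet (G.induce V₃) 0) (hμ₂ : μ₂ ∈ USet (G.induce V₃) 0)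
    (hdec : ∀ x : ↥V₃, μ₁ (some x) + μ₂ (some x) = μ (some ↑x))
    (hdecinf : μ₁ none + μ₂ none = μ none) (hμ₁inf : μ₁ none = 1)
    (η ζ : Option V → ℤ)
    (hη₂ : ∀ x ∈ V₂, η (some x) = μ (some x) + 1)
    (hη₃ : ∀ x : ↥V₃, η (some ↑x) = μ₂ (some x) + 1)
    (hηinf : η none = μ none + 3)
    (hζ₂ : ∀ x ∈ V₂, ζ (some x) = -1)
    (hζ₃ : ∀ x : ↥V₃, ζ (some ↑x) = μ₁ (some x) - 1)
    (hζinf : ζ none = -3) :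
    η ∈ USet G 1 ∧ ζ ∈ USet G (-1) ∧ η + ζ = μ := by
  have hV₃ : V₂ᶜ = V₃ := IsCompl.compl_eq ⟨hdisj, codisjoint_iff.mpr hunion⟩
  have hcover (z : V) : z ∈ V₂ ∨ z ∈ V₃ := hunion.ge (Set.mem_univ z)
  have hclique (K : Finset V) (hK : IsMaxClique G K) :
      (↑K ⊆ V₂ ∧ #K = 2) ∨ (↑K ⊆ V₃ ∧ #K = 3) := by
    rcases hK.1.subset_or_subset_compl hcomp with h | h
    · exact .inl ⟨h, hK2 K hK h⟩
    · rw [hV₃] at h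
      exact .inr ⟨h, hK3 K hK h⟩
  have hcycle (k : ℕ) (v : ℕ → V) (hc : IsChordlessOddCycle G k v) :
      k = 5 ∧ ∀ x ∈ (range k).image v, x ∈ V₂ := by
    rcases hc.forall_mem_or_forall_mem_compl hcomp with h | h
    · exact ⟨hC5 k v hc h, forall_mem_image.mpr fun i hi => h i (mem_range.mp hi)⟩
    · exact absurd (hV₃ ▸ h) (hC3 k v hc)
  refine ⟨mem_USet_one_of_shift hcover hclique hcycle hμ hμ₂ (by omega) hη₂ hη₃ hηinf,
    mem_USet_neg_one_of_shift hcover hclique hcycle hμ₁ hμ₁inf.le hζ₂ hζ₃ hζinf, ?_⟩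
  funext x
  rcases x with _ | z
  · simp only [Pi.add_apply, hηinf, hζinf, add_neg_cancel_right]
  · rcases hcover z with h | h
    · simp only [Pi.add_apply, hη₂ z h, hζ₂ z h, add_neg_cancel_right]
    · simp only [Pi.add_apply, hη₃ ⟨z, h⟩, hζ₃ ⟨z, h⟩, ← hdec ⟨z, h⟩]
      ring

/-- Construction of a decomposition `μ = η + ζ`, `η ∈ U⁽¹⁾`, `ζ ∈ U⁽⁻¹⁾` in the case
where the clique numbers of the components are 2 (on `V₂`) and 3 (on `V₃`). -/
theorem stmt19 (G : SimpleGraph V) (V₂ V₃ : Set V)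
    (hdisj : Disjoint V₂ V₃) (hunion : V₂ ∪ V₃ = Set.univ)
    (hcomp : ∀ x y : V, G.Adj x y → (x ∈ V₂ ↔ y ∈ V₂))
    (hK2 : ∀ K : Finset V, IsMaxClique G K → ↑K ⊆ V₂ → K.card = 2)
    (hK3 : ∀ K : Finset V, IsMaxClique G K → ↑K ⊆ V₃ → K.card = 3)
    (hC5 : ∀ (k : ℕ) (v : ℕ → V), IsChordlessOddCycle G k v →
      (∀ i < k, v i ∈ V₂) → k = 5)
    (hC3 : ∀ (k : ℕ) (v : ℕ → V), IsChordlessOddCycle G k v →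
      ¬ (∀ i < k, v i ∈ V₃))
    (μ : Option V → ℤ) (hμ : μ ∈ USet G 0) (hμinf : 1 ≤ μ none)
    (μ₁ μ₂ : Option ↥V₃ → ℤ)
    (hμ₁ : μ₁ ∈ USet (G.induce V₃) 0) (hμ₂ : μ₂ ∈ USet (G.induce V₃) 0)
    (hdec : ∀ x : ↥V₃, μ₁ (some x) + μ₂ (some x) = μ (some ↑x))
    (hdecinf : μ₁ none + μ₂ none = μ none) (hμ₁inf : μ₁ none = 1)
    (η ζ : Option V → ℤ)
    (hη₂ : ∀ x ∈ V₂, η (some x) = μ (some x) + 1)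
    (hη₃ : ∀ x : ↥V₃, η (some ↑x) = μ₂ (some x) + 1)
    (hηinf : η none = μ none + 3)
    (hζ₂ : ∀ x ∈ V₂, ζ (some x) = -1)
    (hζ₃ : ∀ x : ↥V₃, ζ (some ↑x) = μ₁ (some x) - 1)
    (hζinf : ζ none = -3) :
    η ∈ USet G 1 ∧ ζ ∈ USet G (-1) ∧ η + ζ = μ :=
  stmt19_general G V₂ V₃ hdisj hunion hcomp hK2 hK3 hC5 hC3 μ hμ μ₁ μ₂ hμ₁ hμ₂ hdec hdecinf hμ₁inf η
    ζ hη₂ hη₃ hηinf hζ₂ hζ₃ hζinf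
end
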